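/- In any finite-horizon minimax control system, for every t ∈ {0,…,T} and every nonempty subset P ⊆ 𝒳_t, the dynamic-programming value V_t(P) equals the optimal worst-case cost-to-go from P: V_t(P) = min over all continuation strategies π (assigning to each s ∈ {t,…,T−1} and each continuation history (z_{t+1:s}, u_{t:s−1}) an action in 𝒰_s) of the maximum over x_t ∈ P and w_{t:T−1} (w_ℓ ∈ 𝒲_ℓ) of d_T(x_T), where the continuation trajectory is generated by u_ℓ = π_ℓ(z_{t+1:ℓ}, u_{t:ℓ−1}), x_{ℓ+1} = f_ℓ(x_ℓ, u_ℓ, w_ℓ), z_{ℓ+1} = h_ℓ(x_ℓ, u_ℓ) for ℓ = t, …, T−1. -/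

import Mathlib

/-- A finite-horizon minimax control system. -/
structure Sys where
  T : ℕ
  X : ℕ → Type
  U : ℕ → Type
  W : ℕ → Type
  Z : ℕ → Type
  f : ∀ t, X t → U t → W t → X (t+1)
  h : ∀ t, X t → U t → Z (t+1)
  X0 : Set (X 0)
  d : X T → ℝ

namespace Sys

variable (S : Sys)

/-- A strategy assigns to each time `t` and history `(z_{1:t}, u_{0:t-1})` an action. -/
def Strat := ∀ t : ℕ, (∀ ℓ : Fin t, S.Z (ℓ.1+1)) → (∀ ℓ : Fin t, S.U ℓ.1) → S.U t

/-- Closed-loop trajectory: state, observation history and action history. -/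
def traj (g : S.Strat) (x0 : S.X 0) (w : ∀ t, S.W t) :
    ∀ t : ℕ, S.X t × (∀ ℓ : Fin t, S.Z (ℓ.1+1)) × (∀ ℓ : Fin t, S.U ℓ.1)
  | 0 => (x0, fun i => i.elim0, fun i => i.elim0)
  | t+1 =>
    let p := traj g x0 w t
    let u := g t p.2.1 p.2.2
    (S.f t p.1 u (w t),
     Fin.snoc (α := fun ℓ : Fin (t+1) => S.Z (ℓ.1+1)) p.2.1 (S.h t p.1 u),
     Fin.snoc (α := fun ℓ : Fin (t+1) => S.U ℓ.1) p.2.2 u)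

/-- Worst-case cost of a strategy. -/
noncomputable def J (g : S.Strat) : ℝ :=
  sSup {r | ∃ x0 ∈ S.X0, ∃ w : ∀ t, S.W t, r = S.d (S.traj g x0 w S.T).1}

/-- Open-loop trajectory for a prefix of action values. -/
def olp (x0 : S.X 0) (w : ∀ t, S.W t) : ∀ t : ℕ, (∀ ℓ : Fin t, S.U ℓ.1) → S.X t
  | 0, _ => x0
  | t+1, u => S.f t (olp x0 w t (fun ℓ => u ℓ.castSucc)) (u (Fin.last t)) (w t)

/-- The information state `P_t(z_{1:t}, u_{0:t-1})`. -/
def infoState (t : ℕ) (z : ∀ ℓ : Fin t, S.Z (ℓ.1+1)) (u : ∀ ℓ : Fin t, S.U ℓ.1) :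
    Set (S.X t) :=
  {x | ∃ x0 ∈ S.X0, ∃ w : ∀ s, S.W s,
    (∀ ℓ : Fin t, S.h ℓ.1 (S.olp x0 w ℓ.1 (fun j => u ⟨j.1, j.2.trans ℓ.2⟩)) (u ℓ) = z ℓ) ∧
    S.olp x0 w t u = x}

/-- The strategy-independent information-state update map `f̃_t`. -/
def Ftil (t : ℕ) (P : Set (S.X t)) (u : S.U t) (z : S.Z (t+1)) : Set (S.X (t+1)) :=
  {x' | ∃ x ∈ P, S.h t x u = z ∧ ∃ w : S.W t, x' = S.f t x u w}

/-- The feasible-observation set `Z̃_t(P, u)`. -/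
def Zfeas (t : ℕ) (P : Set (S.X t)) (u : S.U t) : Set (S.Z (t+1)) :=
  {z | ∃ x ∈ P, S.h t x u = z}

/-- The dynamic-programming value functions. -/
noncomputable def V (t : ℕ) (P : Set (S.X t)) : ℝ :=
  if h : t = S.T then sSup {r | ∃ x ∈ P, r = S.d (h ▸ x)}
  else if h2 : t < S.T then
    sInf {r | ∃ u : S.U t,
      r = sSup {s | ∃ z ∈ S.Zfeas t P u, s = V (t+1) (S.Ftil t P u z)}}
  else 0
termination_by S.T - t
decreasing_by omega

end Sys

namespace Sys

variable (S : Sys)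

/-- A continuation strategy from time `t`: it assigns to each later time `t+s`
and continuation history `(z_{t+1:t+s}, u_{t:t+s-1})` an action. -/
def CStrat (t : ℕ) :=
  ∀ s : ℕ, (∀ ℓ : Fin s, S.Z (t+ℓ.1+1)) → (∀ ℓ : Fin s, S.U (t+ℓ.1)) → S.U (t+s)

/-- Closed-loop continuation trajectory starting from state `xt` at time `t`. -/
def ctraj (t : ℕ) (π : S.CStrat t) (xt : S.X t) (w : ∀ s, S.W (t+s)) :
    ∀ k : ℕ, S.X (t+k) × (∀ ℓ : Fin k, S.Z (t+ℓ.1+1)) × (∀ ℓ : Fin k, S.U (t+ℓ.1))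
  | 0 => (xt, fun i => i.elim0, fun i => i.elim0)
  | k+1 =>
    let p := ctraj t π xt w k
    let u := π k p.2.1 p.2.2
    (S.f (t+k) p.1 u (w k),
     Fin.snoc (α := fun ℓ : Fin (k+1) => S.Z (t+ℓ.1+1)) p.2.1 (S.h (t+k) p.1 u),
     Fin.snoc (α := fun ℓ : Fin (k+1) => S.U (t+ℓ.1)) p.2.2 u)

end Sys

namespace Sys

variable (S : Sys)

lemma f_heq {a b : ℕ} (e : a = b) {x : S.X a} {x' : S.X b} {u : S.U a} {u' : S.U b}
    {w : S.W a} {w' : S.W b} (hx : HEq x x') (hu : HEq u u') (hw : HEq w w') :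
    HEq (S.f a x u w) (S.f b x' u' w') := by
  subst e; rw [eq_of_heq hx, eq_of_heq hu, eq_of_heq hw]

lemma h_heq {a b : ℕ} (e : a = b) {x : S.X a} {x' : S.X b} {u : S.U a} {u' : S.U b}
    (hx : HEq x x') (hu : HEq u u') :
    HEq (S.h a x u) (S.h b x' u') := by
  subst e; rw [eq_of_heq hx, eq_of_heq hu]

lemma d_cast_eq {a b : ℕ} (e : a = S.T) (e' : b = S.T) {x : S.X a} {y : S.X b}
    (hxy : HEq x y) : S.d (e ▸ x) = S.d (e' ▸ y) := by
  subst e; subst e'; cases hxy; rfl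

/-- Shift a disturbance sequence one step. -/
def shiftW (t : ℕ) (w : ∀ s, S.W (t+s)) : ∀ s, S.W (t+1+s) :=
  fun s => cast (congrArg S.W (Nat.add_right_comm t 1 s).symm) (w (s+1))

/-- Shift a continuation strategy one step, fixing the first observation and action. -/
def shiftStrat (t : ℕ) (π : S.CStrat t) (u0 : S.U t) (z : S.Z (t+1)) : S.CStrat (t+1) :=
  fun s zs us =>
    cast (congrArg S.U (Nat.add_right_comm t 1 s).symm)
      (π (s+1)
        (Fin.cons (α := fun ℓ : Fin (s+1) => S.Z (t+ℓ.1+1)) z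
          (fun j => cast (congrArg (fun n => S.Z (n+1)) (Nat.add_right_comm t 1 j.1)) (zs j)))
        (Fin.cons (α := fun ℓ : Fin (s+1) => S.U (t+ℓ.1)) u0
          (fun j => cast (congrArg S.U (Nat.add_right_comm t 1 j.1)) (us j))))

lemma ctraj_shift (t : ℕ) (π : S.CStrat t) (x : S.X t) (w : ∀ s, S.W (t+s)) (u0 : S.U t)
    (hu0 : u0 = π 0 (fun i => i.elim0) (fun i => i.elim0)) (k : ℕ) :
    HEq (S.ctraj t π x w (k+1)).1
        (S.ctraj (t+1) (S.shiftStrat t π u0 (S.h t x u0)) (S.f t x u0 (w 0)) (S.shiftW t w) k).1 ∧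
    ((S.ctraj t π x w (k+1)).2.1 ⟨0, k.succ_pos⟩ = S.h t x u0) ∧
    (∀ j : Fin k, HEq ((S.ctraj t π x w (k+1)).2.1 j.succ)
        ((S.ctraj (t+1) (S.shiftStrat t π u0 (S.h t x u0)) (S.f t x u0 (w 0)) (S.shiftW t w) k).2.1 j)) ∧
    ((S.ctraj t π x w (k+1)).2.2 ⟨0, k.succ_pos⟩ = u0) ∧
    (∀ j : Fin k, HEq ((S.ctraj t π x w (k+1)).2.2 j.succ)
        ((S.ctraj (t+1) (S.shiftStrat t π u0 (S.h t x u0)) (S.f t x u0 (w 0)) (S.shiftW t w) k).2.2 j)) := by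
  induction k with
  | zero =>
    subst hu0
    refine ⟨HEq.rfl, ?_, fun j => j.elim0, ?_, fun j => j.elim0⟩
    · simp [ctraj, Fin.snoc]
    · simp [ctraj, Fin.snoc]
  | succ k IH =>
    obtain ⟨hx1, hz0, hzs, hu2, hus⟩ := IH
    set σ := S.shiftStrat t π u0 (S.h t x u0) with hσ
    set x1 := S.f t x u0 (w 0) with hx1d
    set w' := S.shiftW t w with hw'
    set p := S.ctraj t π x w (k+1) with hp
    set c := S.ctraj (t+1) σ x1 w' k with hc
    have hZ : p.2.1 = Fin.cons (α := fun ℓ : Fin (k+1) => S.Z (t+ℓ.1+1)) (S.h t x u0)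
        (fun j => cast (congrArg (fun n => S.Z (n+1)) (Nat.add_right_comm t 1 j.1)) (c.2.1 j)) := by
      funext ℓ
      induction ℓ using Fin.cases with
      | zero => exact hz0
      | succ j => exact eq_of_heq ((hzs j).trans (cast_heq _ _).symm)
    have hU : p.2.2 = Fin.cons (α := fun ℓ : Fin (k+1) => S.U (t+ℓ.1)) u0
        (fun j => cast (congrArg S.U (Nat.add_right_comm t 1 j.1)) (c.2.2 j)) := by
      funext ℓ
      induction ℓ using Fin.cases with
      | zero => exact hu2
      | succ j => exact eq_of_heq ((hus j).trans (cast_heq _ _).symm)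
    have hueq : HEq (π (k+1) p.2.1 p.2.2) (σ k c.2.1 c.2.2) := by
      have hh : σ k c.2.1 c.2.2
          = cast (congrArg S.U (Nat.add_right_comm t 1 k).symm) (π (k+1) p.2.1 p.2.2) := by
        rw [hZ, hU]; rfl
      rw [hh]; exact (cast_heq _ _).symm
    have hwk : HEq (w (k+1)) (w' k) := (cast_heq _ _).symm
    have hxstep : HEq (S.f (t+(k+1)) p.1 (π (k+1) p.2.1 p.2.2) (w (k+1)))
        (S.f (t+1+k) c.1 (σ k c.2.1 c.2.2) (w' k)) := S.f_heq (by omega) hx1 hueq hwk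
    have hzstep : HEq (S.h (t+(k+1)) p.1 (π (k+1) p.2.1 p.2.2))
        (S.h (t+1+k) c.1 (σ k c.2.1 c.2.2)) := S.h_heq (by omega) hx1 hueq
    refine ⟨hxstep, ?_, ?_, ?_, ?_⟩
    · show (Fin.snoc (α := fun ℓ : Fin (k+1+1) => S.Z (t+ℓ.1+1)) p.2.1
          (S.h (t+(k+1)) p.1 (π (k+1) p.2.1 p.2.2))) (⟨0, k.succ_pos⟩ : Fin (k+1)).castSucc = S.h t x u0
      rw [Fin.snoc_castSucc]; exact hz0
    · intro j
      induction j using Fin.lastCases with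
      | last =>
        show HEq ((Fin.snoc (α := fun ℓ : Fin (k+1+1) => S.Z (t+ℓ.1+1)) p.2.1
            (S.h (t+(k+1)) p.1 (π (k+1) p.2.1 p.2.2))) (Fin.last k).succ)
          ((Fin.snoc (α := fun ℓ : Fin (k+1) => S.Z (t+1+ℓ.1+1)) c.2.1
            (S.h (t+1+k) c.1 (σ k c.2.1 c.2.2))) (Fin.last k))
        rw [Fin.succ_last, Fin.snoc_last, Fin.snoc_last]; exact hzstep
      | cast i =>
        show HEq ((Fin.snoc (α := fun ℓ : Fin (k+1+1) => S.Z (t+ℓ.1+1)) p.2.1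
            (S.h (t+(k+1)) p.1 (π (k+1) p.2.1 p.2.2))) i.castSucc.succ)
          ((Fin.snoc (α := fun ℓ : Fin (k+1) => S.Z (t+1+ℓ.1+1)) c.2.1
            (S.h (t+1+k) c.1 (σ k c.2.1 c.2.2))) i.castSucc)
        rw [Fin.succ_castSucc, Fin.snoc_castSucc, Fin.snoc_castSucc]; exact hzs i
    · show (Fin.snoc (α := fun ℓ : Fin (k+1+1) => S.U (t+ℓ.1)) p.2.2
          (π (k+1) p.2.1 p.2.2)) (⟨0, k.succ_pos⟩ : Fin (k+1)).castSucc = u0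
      rw [Fin.snoc_castSucc]; exact hu2
    · intro j
      induction j using Fin.lastCases with
      | last =>
        show HEq ((Fin.snoc (α := fun ℓ : Fin (k+1+1) => S.U (t+ℓ.1)) p.2.2
            (π (k+1) p.2.1 p.2.2)) (Fin.last k).succ)
          ((Fin.snoc (α := fun ℓ : Fin (k+1) => S.U (t+1+ℓ.1)) c.2.2
            (σ k c.2.1 c.2.2)) (Fin.last k))
        rw [Fin.succ_last, Fin.snoc_last, Fin.snoc_last]; exact hueq
      | cast i =>
        show HEq ((Fin.snoc (α := fun ℓ : Fin (k+1+1) => S.U (t+ℓ.1)) p.2.2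
            (π (k+1) p.2.1 p.2.2)) i.castSucc.succ)
          ((Fin.snoc (α := fun ℓ : Fin (k+1) => S.U (t+1+ℓ.1)) c.2.2
            (σ k c.2.1 c.2.2)) i.castSucc)
        rw [Fin.succ_castSucc, Fin.snoc_castSucc, Fin.snoc_castSucc]; exact hus i

end Sys

namespace Sys

variable (S : Sys)

lemma ctraj_shift_cost (t k : ℕ) (hk : t + (k+1) = S.T) (hk' : t+1+k = S.T)
    (π : S.CStrat t) (x : S.X t) (w : ∀ s, S.W (t+s)) (u0 : S.U t)
    (hu0 : u0 = π 0 (fun i => i.elim0) (fun i => i.elim0)) :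
    S.d (hk ▸ (S.ctraj t π x w (k+1)).1)
      = S.d (hk' ▸ (S.ctraj (t+1) (S.shiftStrat t π u0 (S.h t x u0))
          (S.f t x u0 (w 0)) (S.shiftW t w) k).1) :=
  S.d_cast_eq hk hk' (S.ctraj_shift t π x w u0 hu0 k).1

/-- Extend a disturbance sequence backwards by one step. -/
def extendW (t : ℕ) (w0 : S.W t) (w' : ∀ s, S.W (t+1+s)) : ∀ s, S.W (t+s)
  | 0 => w0
  | s+1 => cast (congrArg S.W (Nat.add_right_comm t 1 s)) (w' s)

lemma shiftW_extendW (t : ℕ) (w0 : S.W t) (w' : ∀ s, S.W (t+1+s)) :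
    S.shiftW t (S.extendW t w0 w') = w' := by
  funext s; simp [shiftW, extendW, cast_cast, cast_eq]

/-- Assemble a continuation strategy from a first action and a family of tails. -/
def assemble (t : ℕ) (ustar : S.U t) (π' : S.Z (t+1) → S.CStrat (t+1)) : S.CStrat t :=
  fun s => match s with
  | 0 => fun _ _ => ustar
  | s+1 => fun zs us =>
      cast (congrArg S.U (Nat.add_right_comm t 1 s))
        ((π' (zs ⟨0, s.succ_pos⟩)) s
          (fun j => cast (congrArg (fun n => S.Z (n+1)) (Nat.add_right_comm t 1 j.1).symm) (zs j.succ))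
          (fun j => cast (congrArg S.U (Nat.add_right_comm t 1 j.1).symm) (us j.succ)))

lemma assembled_shift (t : ℕ) (ustar : S.U t) (π' : S.Z (t+1) → S.CStrat (t+1)) (z : S.Z (t+1)) :
    S.shiftStrat t (S.assemble t ustar π') ustar z = π' z := by
  funext s zs us
  simp only [shiftStrat, assemble]
  simp [Fin.cons_succ, Fin.mk_zero, cast_cast, cast_eq]
  show π' z s (fun j => cast (congrArg (fun n => S.Z (n+1)) (Nat.add_right_comm t 1 j.1).symm)
      (cast (congrArg (fun n => S.Z (n+1)) (Nat.add_right_comm t 1 j.1)) (zs j)))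
    (fun j => cast (congrArg S.U (Nat.add_right_comm t 1 j.1).symm)
      (cast (congrArg S.U (Nat.add_right_comm t 1 j.1)) (us j))) = π' z s zs us
  simp only [cast_cast, cast_eq]

/-- The worst-case cost set of a continuation strategy. -/
def Cset (t k : ℕ) (hk : t + k = S.T) (P : Set (S.X t)) (π : S.CStrat t) : Set ℝ :=
  {c | ∃ x ∈ P, ∃ w : ∀ s, S.W (t+s), c = S.d (hk ▸ (S.ctraj t π x w k).1)}

/-- The set of worst-case costs of continuation strategies. -/
def Rset (t k : ℕ) (hk : t + k = S.T) (P : Set (S.X t)) : Set ℝ :=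
  {r | ∃ π : S.CStrat t, r = sSup (S.Cset t k hk P π)}

lemma Cset_subset_range (t k : ℕ) (hk : t + k = S.T) (P : Set (S.X t)) (π : S.CStrat t) :
    S.Cset t k hk P π ⊆ Set.range S.d := by
  rintro c ⟨x, hx, w, rfl⟩; exact ⟨_, rfl⟩

lemma Cset_nonempty [∀ n, Nonempty (S.W n)] (t k : ℕ) (hk : t + k = S.T) (P : Set (S.X t))
    (hP : P.Nonempty) (π : S.CStrat t) : (S.Cset t k hk P π).Nonempty := by
  haveI : Nonempty (∀ s, S.W (t+s)) := ⟨fun s => Classical.arbitrary _⟩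
  exact ⟨_, hP.choose, hP.choose_spec, Classical.arbitrary _, rfl⟩

lemma sSup_Cset_mem [∀ n, Finite (S.X n)] [∀ n, Nonempty (S.W n)] (t k : ℕ) (hk : t + k = S.T)
    (P : Set (S.X t)) (hP : P.Nonempty) (π : S.CStrat t) :
    sSup (S.Cset t k hk P π) ∈ S.Cset t k hk P π :=
  (S.Cset_nonempty t k hk P hP π).csSup_mem
    ((Set.finite_range S.d).subset (S.Cset_subset_range t k hk P π))

lemma Rset_subset_range [∀ n, Finite (S.X n)] [∀ n, Nonempty (S.W n)] (t k : ℕ)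
    (hk : t + k = S.T) (P : Set (S.X t)) (hP : P.Nonempty) :
    S.Rset t k hk P ⊆ Set.range S.d := by
  rintro r ⟨π, rfl⟩
  exact S.Cset_subset_range t k hk P π (S.sSup_Cset_mem t k hk P hP π)

lemma Rset_nonempty [∀ n, Nonempty (S.U n)] (t k : ℕ) (hk : t + k = S.T) (P : Set (S.X t)) :
    (S.Rset t k hk P).Nonempty := by
  haveI : Nonempty (S.CStrat t) := ⟨fun s _ _ => Classical.arbitrary _⟩
  exact ⟨_, Classical.arbitrary _, rfl⟩

lemma cost_mem_shift (t k : ℕ) (hk : t+(k+1) = S.T) (hk' : t+1+k = S.T) (P : Set (S.X t))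
    (π : S.CStrat t) (u0 : S.U t) (hu0 : u0 = π 0 (fun i => i.elim0) (fun i => i.elim0))
    (x : S.X t) (hx : x ∈ P) (w : ∀ s, S.W (t+s)) :
    S.d (hk ▸ (S.ctraj t π x w (k+1)).1) ∈
      S.Cset (t+1) k hk' (S.Ftil t P u0 (S.h t x u0)) (S.shiftStrat t π u0 (S.h t x u0)) :=
  ⟨S.f t x u0 (w 0), ⟨x, hx, rfl, w 0, rfl⟩, S.shiftW t w,
    S.ctraj_shift_cost t k hk hk' π x w u0 hu0⟩

lemma Cset_shift_subset (t k : ℕ) (hk : t+(k+1) = S.T) (hk' : t+1+k = S.T) (P : Set (S.X t))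
    (π : S.CStrat t) (u0 : S.U t) (hu0 : u0 = π 0 (fun i => i.elim0) (fun i => i.elim0))
    (z : S.Z (t+1)) :
    S.Cset (t+1) k hk' (S.Ftil t P u0 z) (S.shiftStrat t π u0 z) ⊆ S.Cset t (k+1) hk P π := by
  rintro c ⟨x', ⟨x, hx, hzx, w0, rfl⟩, w', rfl⟩
  refine ⟨x, hx, S.extendW t w0 w', ?_⟩
  subst hzx
  rw [S.ctraj_shift_cost t k hk hk' π x (S.extendW t w0 w') u0 hu0, S.shiftW_extendW]
  rfl

lemma Ftil_nonempty [∀ n, Nonempty (S.W n)] {t : ℕ} {P : Set (S.X t)} {u : S.U t}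
    {z : S.Z (t+1)} (hz : z ∈ S.Zfeas t P u) : (S.Ftil t P u z).Nonempty := by
  obtain ⟨x, hx, hzz⟩ := hz
  exact ⟨S.f t x u (Classical.arbitrary _), x, hx, hzz, _, rfl⟩

end Sys

namespace Sys

variable (S : Sys)

lemma main_lemma [∀ n, Finite (S.X n)] [∀ n, Nonempty (S.U n)] [∀ n, Finite (S.U n)]
    [∀ n, Nonempty (S.W n)] [∀ n, Finite (S.Z n)] :
    ∀ (k t : ℕ) (hk : t + k = S.T) (P : Set (S.X t)), P.Nonempty →
      S.V t P = sInf (S.Rset t k hk P) := by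
  intro k
  induction k with
  | zero =>
    intro t hk P hP
    have ht : t = S.T := by omega
    subst ht
    haveI : Nonempty (∀ s, S.W (S.T + s)) := ⟨fun s => Classical.arbitrary _⟩
    haveI : Nonempty (S.CStrat S.T) := ⟨fun s _ _ => Classical.arbitrary _⟩
    rw [V, dif_pos rfl]
    have hCeq : ∀ π : S.CStrat S.T, S.Cset S.T 0 hk P π
        = {r | ∃ x ∈ P, r = S.d ((rfl : S.T = S.T) ▸ x)} := by
      intro π; ext r; constructor
      · rintro ⟨x, hx, w, rfl⟩; exact ⟨x, hx, rfl⟩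
      · rintro ⟨x, hx, rfl⟩; exact ⟨x, hx, Classical.arbitrary _, rfl⟩
    have hR : S.Rset S.T 0 hk P = {sSup {r | ∃ x ∈ P, r = S.d ((rfl : S.T = S.T) ▸ x)}} := by
      ext r; simp [Rset, hCeq]
    rw [hR, csInf_singleton]
  | succ k IH =>
    intro t hk P hP
    have hk' : t + 1 + k = S.T := by omega
    haveI : Nonempty (∀ s, S.W (t + s)) := ⟨fun s => Classical.arbitrary _⟩
    haveI : Nonempty (S.CStrat t) := ⟨fun s _ _ => Classical.arbitrary _⟩
    haveI : Nonempty (S.CStrat (t+1)) := ⟨fun s _ _ => Classical.arbitrary _⟩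
    have hdfin : (Set.range S.d).Finite := Set.finite_range _
    rw [V, dif_neg (by omega : ¬ t = S.T), dif_pos (by omega : t < S.T)]
    -- facts about the inner value sets
    have hVz : ∀ (u : S.U t) (z : S.Z (t+1)), z ∈ S.Zfeas t P u →
        S.V (t+1) (S.Ftil t P u z) ∈ Set.range S.d ∧
        (∀ π' : S.CStrat (t+1), S.V (t+1) (S.Ftil t P u z)
            ≤ sSup (S.Cset (t+1) k hk' (S.Ftil t P u z) π')) ∧
        (∃ π' : S.CStrat (t+1), S.V (t+1) (S.Ftil t P u z)
            = sSup (S.Cset (t+1) k hk' (S.Ftil t P u z) π')) := by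
      intro u z hz
      have hFne : (S.Ftil t P u z).Nonempty := S.Ftil_nonempty hz
      rw [IH (t+1) hk' _ hFne]
      have hmem : sInf (S.Rset (t+1) k hk' (S.Ftil t P u z)) ∈ S.Rset (t+1) k hk' (S.Ftil t P u z) :=
        (S.Rset_nonempty (t+1) k hk' _).csInf_mem
          (hdfin.subset (S.Rset_subset_range (t+1) k hk' _ hFne))
      refine ⟨S.Rset_subset_range (t+1) k hk' _ hFne hmem, ?_, hmem⟩
      intro π'
      exact csInf_le (hdfin.subset (S.Rset_subset_range (t+1) k hk' _ hFne)).bddBelow ⟨π', rfl⟩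
    have hSvsub : ∀ u : S.U t,
        {s | ∃ z ∈ S.Zfeas t P u, s = S.V (t+1) (S.Ftil t P u z)} ⊆ Set.range S.d := by
      rintro u s ⟨z, hz, rfl⟩; exact (hVz u z hz).1
    have hSvne : ∀ u : S.U t,
        {s | ∃ z ∈ S.Zfeas t P u, s = S.V (t+1) (S.Ftil t P u z)}.Nonempty := by
      intro u
      obtain ⟨x, hx⟩ := hP
      exact ⟨_, S.h t x u, ⟨x, hx, rfl⟩, rfl⟩
    have hRoutsub : {r | ∃ u : S.U t,
        r = sSup {s | ∃ z ∈ S.Zfeas t P u, s = S.V (t+1) (S.Ftil t P u z)}} ⊆ Set.range S.d := by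
      rintro r ⟨u, rfl⟩
      exact hSvsub u ((hSvne u).csSup_mem (hdfin.subset (hSvsub u)))
    apply le_antisymm
    · -- DP value ≤ inf over strategies
      apply le_csInf (S.Rset_nonempty t (k+1) hk P)
      rintro r ⟨π, rfl⟩
      have h1 : sInf {r | ∃ u : S.U t,
          r = sSup {s | ∃ z ∈ S.Zfeas t P u, s = S.V (t+1) (S.Ftil t P u z)}}
          ≤ sSup {s | ∃ z ∈ S.Zfeas t P (π 0 (fun i => i.elim0) (fun i => i.elim0)),
              s = S.V (t+1) (S.Ftil t P (π 0 (fun i => i.elim0) (fun i => i.elim0)) z)} :=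
        csInf_le (hdfin.subset hRoutsub).bddBelow ⟨_, rfl⟩
      refine h1.trans (csSup_le (hSvne _) ?_)
      rintro s ⟨z, hz, rfl⟩
      refine ((hVz _ z hz).2.1 (S.shiftStrat t π (π 0 (fun i => i.elim0) (fun i => i.elim0)) z)).trans ?_
      refine csSup_le_csSup (hdfin.subset (S.Cset_subset_range t (k+1) hk P π)).bddAbove
        (S.Cset_nonempty (t+1) k hk' _ (S.Ftil_nonempty hz) _)
        (S.Cset_shift_subset t k hk hk' P π _ rfl z)
    · -- inf over strategies ≤ DP value
      have hmem : sInf {r | ∃ u : S.U t,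
          r = sSup {s | ∃ z ∈ S.Zfeas t P u, s = S.V (t+1) (S.Ftil t P u z)}}
          ∈ {r | ∃ u : S.U t,
          r = sSup {s | ∃ z ∈ S.Zfeas t P u, s = S.V (t+1) (S.Ftil t P u z)}} :=
        Set.Nonempty.csInf_mem ⟨_, Classical.arbitrary _, rfl⟩ (hdfin.subset hRoutsub)
      obtain ⟨ustar, hustar⟩ := hmem
      have hchoice : ∀ z : S.Z (t+1), ∃ π' : S.CStrat (t+1), z ∈ S.Zfeas t P ustar →
          S.V (t+1) (S.Ftil t P ustar z)
            = sSup (S.Cset (t+1) k hk' (S.Ftil t P ustar z) π') := by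
        intro z
        by_cases hz : z ∈ S.Zfeas t P ustar
        · obtain ⟨π', hπ'⟩ := (hVz ustar z hz).2.2
          exact ⟨π', fun _ => hπ'⟩
        · exact ⟨Classical.arbitrary _, fun h => absurd h hz⟩
      choose π' hπ' using hchoice
      have hr : sSup (S.Cset t (k+1) hk P (S.assemble t ustar π')) ≤ sInf {r | ∃ u : S.U t,
          r = sSup {s | ∃ z ∈ S.Zfeas t P u, s = S.V (t+1) (S.Ftil t P u z)}} := by
        rw [hustar]
        apply csSup_le (S.Cset_nonempty t (k+1) hk P hP _)
        rintro c ⟨x, hx, w, rfl⟩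
        have hz : S.h t x ustar ∈ S.Zfeas t P ustar := ⟨x, hx, rfl⟩
        have hmemc := S.cost_mem_shift t k hk hk' P (S.assemble t ustar π') ustar rfl x hx w
        rw [S.assembled_shift t ustar π' (S.h t x ustar)] at hmemc
        calc S.d (hk ▸ (S.ctraj t (S.assemble t ustar π') x w (k+1)).1)
            ≤ sSup (S.Cset (t+1) k hk' (S.Ftil t P ustar (S.h t x ustar)) (π' (S.h t x ustar))) :=
              le_csSup (hdfin.subset (S.Cset_subset_range (t+1) k hk' _ _)).bddAbove hmemc
          _ = S.V (t+1) (S.Ftil t P ustar (S.h t x ustar)) := (hπ' _ hz).symm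
          _ ≤ sSup {s | ∃ z ∈ S.Zfeas t P ustar, s = S.V (t+1) (S.Ftil t P ustar z)} :=
              le_csSup (hdfin.subset (hSvsub ustar)).bddAbove ⟨_, hz, rfl⟩
      exact le_trans (csInf_le (hdfin.subset (S.Rset_subset_range t (k+1) hk P hP)).bddBelow
        ⟨S.assemble t ustar π', rfl⟩) hr

end Sys

/-- the dynamic-programming value `V_t(P)` equals the optimal
worst-case cost-to-go from the set `P` of feasible states at time `t`. -/
theorem stmt15 (S : Sys) (hT : 1 ≤ S.T)
    [∀ t, Finite (S.X t)] [∀ t, Nonempty (S.X t)]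
    [∀ t, Finite (S.U t)] [∀ t, Nonempty (S.U t)]
    [∀ t, Finite (S.W t)] [∀ t, Nonempty (S.W t)]
    [∀ t, Finite (S.Z t)] [∀ t, Nonempty (S.Z t)]
    (hX0 : S.X0.Nonempty) :
    ∀ (t k : ℕ) (hk : t + k = S.T) (P : Set (S.X t)), P.Nonempty →
      S.V t P =
        sInf {r | ∃ π : S.CStrat t,
          r = sSup {c | ∃ x ∈ P, ∃ w : ∀ s, S.W (t+s),
            c = S.d (hk ▸ (S.ctraj t π x w k).1)}} := by
  intro t k hk P hP
  exact S.main_lemma k t hk P hP
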